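/- arXiv:1804.10222 — 2 statements merged into one kernel-verified Lean document; each statement's English description precedes it below -/
import Mathlib

section
/- Let a : I → ℝ and b : I → ℝ be continuous on an open interval I ∋ z, with a bounded above and below by positive constants near a finite boundary point e of I, and b bounded near e. Define Λ(x) = ∫_z^x 2b(y)/a(y) dy, s(x) = ∫_z^x e^{−Λ(y)} dy, m(x) = ∫_z^x 2 e^{Λ(y)} / a(y) dy. Then s and m are bounded on a neighborhood of e intersected with I, i.e. the finite boundary e is accessible: the integral u(e) = ∫ over (z,e) of m((z,y)) s(dy) is finite. -/
/-!
On `[z, r)` the drift `2b/a` is bounded, so `|Λ| ≤ C` there and `e^{±Λ} ≤ e^C`. Hence the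
integrands of `s` and `m`, and the Feller integrand `m e^{-Λ}`, are bounded on a bounded interval;
continuity of the primitives supplies the measurability needed for integrability.
-/

open Set MeasureTheory intervalIntegral
open scoped Topology

lemma continuousOn_primitive_Ico {f : ℝ → ℝ} {z r : ℝ} (hf : ContinuousOn f (Ico z r)) :
    ContinuousOn (fun x => ∫ y in z..x, f y) (Ico z r) := by
  intro x hx
  obtain ⟨c, hxc, hcr⟩ := exists_between hx.2
  have hzc : z ≤ c := hx.1.trans hxc.le
  have hcont : ContinuousOn (fun x => ∫ y in z..x, f y) (Icc z c) := by
    rw [← uIcc_of_le hzc]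
    refine continuousOn_primitive_interval ?_
    rw [uIcc_of_le hzc]
    exact (hf.mono (Icc_subset_Ico_right hcr)).integrableOn_compact isCompact_Icc
  have hnhds : Icc z c ∈ 𝓝[Ico z r] x :=
    mem_nhdsWithin.2 ⟨Iio c, isOpen_Iio, hxc, fun y hy => ⟨hy.2.1, hy.1.le⟩⟩
  exact (hcont x ⟨hx.1, hxc.le⟩).mono_of_mem_nhdsWithin hnhds

lemma abs_primitive_le_of_abs_le {f : ℝ → ℝ} {z r x K : ℝ}
    (hf : ∀ y ∈ Ico z r, |f y| ≤ K) (hx : x ∈ Ico z r) :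
    |∫ y in z..x, f y| ≤ K * (r - z) := by
  have hK : 0 ≤ K := (abs_nonneg _).trans (hf z ⟨le_rfl, hx.1.trans_lt hx.2⟩)
  calc |∫ y in z..x, f y| = ‖∫ y in z..x, f y‖ := (Real.norm_eq_abs _).symm
    _ ≤ K * |x - z| := by
        refine intervalIntegral.norm_integral_le_of_norm_le_const fun y hy => ?_
        rw [uIoc_of_le hx.1] at hy
        exact hf y ⟨hy.1.le, hy.2.trans_lt hx.2⟩
    _ ≤ K * (r - z) := by
        rw [abs_of_nonneg (sub_nonneg.2 hx.1)]
        gcongr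
        exact hx.2.le

lemma abs_div_le_mul_of_inv_le {u v B c : ℝ} (hc : 0 < c) (hu : |u| ≤ B) (hv : c⁻¹ ≤ v) :
    |u / v| ≤ B * c := by
  have hv0 : 0 < v := (inv_pos.2 hc).trans_le hv
  rw [abs_div, abs_of_pos hv0, div_le_iff₀ hv0]
  calc |u| ≤ B := hu
    _ = B * c * c⁻¹ := by field_simp
    _ ≤ B * c * v := by have := (abs_nonneg u).trans hu; gcongr

lemma abs_primitive_div_le {g a : ℝ → ℝ} {z r x G c : ℝ} (hc : 0 < c)
    (hg : ∀ y ∈ Ico z r, |g y| ≤ G) (ha : ∀ y ∈ Ico z r, c⁻¹ ≤ a y)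
    (hx : x ∈ Ico z r) :
    |∫ y in z..x, g y / a y| ≤ G * c * (r - z) :=
  abs_primitive_le_of_abs_le (fun y hy => abs_div_le_mul_of_inv_le hc (hg y hy) (ha y hy)) hx

lemma integrableOn_Ioo_of_continuousOn_of_abs_le {f : ℝ → ℝ} {z r B : ℝ}
    (hf : ContinuousOn f (Ioo z r)) (hB : ∀ x ∈ Ioo z r, |f x| ≤ B) :
    IntegrableOn f (Ioo z r) :=
  .of_bound measure_Ioo_lt_top (hf.aestronglyMeasurable measurableSet_Ioo) B
    (ae_restrict_of_forall_mem measurableSet_Ioo hB)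

theorem stmt14_general (l r z : ℝ) (hlz : l < z)
    (a b : ℝ → ℝ)
    (hac : ContinuousOn a (Ioo l r)) (hbc : ContinuousOn b (Ioo l r))
    (abar bbar : ℝ) (habar : 0 < abar)
    (ha : ∀ x ∈ Ico z r, abar⁻¹ ≤ a x ∧ a x ≤ abar)
    (hb : ∀ x ∈ Ico z r, |b x| ≤ bbar)
    (Λ s m : ℝ → ℝ)
    (hΛ : ∀ x : ℝ, Λ x = ∫ y in z..x, 2 * b y / a y)
    (hs : ∀ x : ℝ, s x = ∫ y in z..x, Real.exp (-(Λ y)))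
    (hm : ∀ x : ℝ, m x = ∫ y in z..x, 2 * Real.exp (Λ y) / a y) :
    (∃ M : ℝ, ∀ x ∈ Ico z r, |s x| ≤ M ∧ |m x| ≤ M) ∧
      IntegrableOn (fun y => m y * Real.exp (-(Λ y))) (Ioo z r) := by
  have ha0 : ∀ x ∈ Ico z r, a x ≠ 0 := fun x hx =>
    ((inv_pos.2 habar).trans_le (ha x hx).1).ne'
  have hIco : Ico z r ⊆ Ioo l r := fun x hx => ⟨hlz.trans_le hx.1, hx.2⟩
  set C := 2 * bbar * abar * (r - z)
  have hΛC : ∀ x ∈ Ico z r, |Λ x| ≤ C := fun x hx => by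
    rw [hΛ]
    refine abs_primitive_div_le habar (fun y hy => ?_) (fun y hy => (ha y hy).1) hx
    rw [abs_mul, abs_two]
    exact mul_le_mul_of_nonneg_left (hb y hy) zero_le_two
  have hexpΛ : ∀ x ∈ Ico z r, Real.exp (Λ x) ≤ Real.exp C := fun x hx =>
    Real.exp_le_exp.2 ((le_abs_self _).trans (hΛC x hx))
  have hexp_negΛ : ∀ x ∈ Ico z r, Real.exp (-Λ x) ≤ Real.exp C := fun x hx =>
    Real.exp_le_exp.2 ((neg_le_abs _).trans (hΛC x hx))
  have hsM : ∀ x ∈ Ico z r, |s x| ≤ Real.exp C * (r - z) := fun x hx => by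
    rw [hs]
    refine abs_primitive_le_of_abs_le (fun y hy => ?_) hx
    rw [abs_of_pos (Real.exp_pos _)]
    exact hexp_negΛ y hy
  have hmM : ∀ x ∈ Ico z r, |m x| ≤ 2 * Real.exp C * abar * (r - z) := fun x hx => by
    rw [hm]
    refine abs_primitive_div_le habar (fun y hy => ?_) (fun y hy => (ha y hy).1) hx
    rw [abs_of_pos (by positivity)]
    exact mul_le_mul_of_nonneg_left (hexpΛ y hy) zero_le_two
  have hΛc : ContinuousOn Λ (Ico z r) :=
    (continuousOn_primitive_Ico <| (continuousOn_const.mul (hbc.mono hIco)).div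
      (hac.mono hIco) ha0).congr fun x _ => hΛ x
  have hmc : ContinuousOn m (Ico z r) :=
    (continuousOn_primitive_Ico <| (continuousOn_const.mul hΛc.rexp).div
      (hac.mono hIco) ha0).congr fun x _ => hm x
  refine ⟨⟨max (Real.exp C * (r - z)) (2 * Real.exp C * abar * (r - z)), fun x hx =>
    ⟨(hsM x hx).trans (le_max_left _ _), (hmM x hx).trans (le_max_right _ _)⟩⟩, ?_⟩
  refine integrableOn_Ioo_of_continuousOn_of_abs_le
    (B := 2 * Real.exp C * abar * (r - z) * Real.exp C)
    ((hmc.mul hΛc.neg.rexp).mono Ioo_subset_Ico_self) fun x hx => ?_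
  replace hx : x ∈ Ico z r := Ioo_subset_Ico_self hx
  rw [abs_mul, abs_of_pos (Real.exp_pos _)]
  exact mul_le_mul (hmM x hx) (hexp_negΛ x hx) (Real.exp_pos _).le
    ((abs_nonneg _).trans (hmM x hx))

theorem stmt14 (l r z : ℝ) (hlz : l < z) (hzr : z < r)
    (a b : ℝ → ℝ)
    (hac : ContinuousOn a (Ioo l r)) (hbc : ContinuousOn b (Ioo l r))
    (abar bbar : ℝ) (habar : 0 < abar)
    (ha : ∀ x ∈ Ico z r, abar⁻¹ ≤ a x ∧ a x ≤ abar)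
    (hb : ∀ x ∈ Ico z r, |b x| ≤ bbar)
    (Λ s m : ℝ → ℝ)
    (hΛ : ∀ x : ℝ, Λ x = ∫ y in z..x, 2 * b y / a y)
    (hs : ∀ x : ℝ, s x = ∫ y in z..x, Real.exp (-(Λ y)))
    (hm : ∀ x : ℝ, m x = ∫ y in z..x, 2 * Real.exp (Λ y) / a y) :
    (∃ M : ℝ, ∀ x ∈ Ico z r, |s x| ≤ M ∧ |m x| ≤ M) ∧
      IntegrableOn (fun y => m y * Real.exp (-(Λ y))) (Ioo z r) :=
  stmt14_general l r z hlz a b hac hbc abar bbar habar ha hb Λ s m hΛ hs hm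
end

section
/- Let a, b : [z, ∞) → ℝ with a(x) ≤ ā for some ā > 0 and |b(x)| ≤ b̄(1 + |x|), and a bounded below by a positive constant. With Λ(x) = ∫_z^x 2b/a, there is M > 0 with |Λ(y) − Λ(w)| ≤ M |y² − w²| for y, w ≥ z > 0, and the exit integral u(x) = 2 ∫_z^x ∫_z^y e^{Λ(w) − Λ(y)} / a(w) dw dy satisfies u(x) → ∞ as x → ∞; hence +∞ is not an exit boundary. -/
/-!
On `[z, ∞)` the drift ratio satisfies `|2b/a| ≤ 2Mx` with `M = ā b̄ (1 + 1/z)`, and integrating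
this gives the quadratic bound on `Λ`. Hence `Λ` varies by at most `2M` on the window
`[y - 1/y, y]`, so the inner integral of `u` at `y` is at least `e^{-2M} / (ā y)`, and integrating
`1/y` makes `u` grow at least logarithmically.
-/

open Set Filter MeasureTheory intervalIntegral

theorem ContinuousOn.continuousOn_primitive_Ici {f : ℝ → ℝ} {z : ℝ}
    (hf : ContinuousOn f (Ici z)) :
    ContinuousOn (fun x => ∫ t in z..x, f t) (Ici z) := by
  intro x hx
  have hint : IntervalIntegrable f volume (min z z) (max z (x + 1)) := by
    rw [min_self, max_eq_right (by linarith [mem_Ici.1 hx])]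
    exact (hf.mono Icc_subset_Ici_self).intervalIntegrable_of_Icc (by linarith [mem_Ici.1 hx])
  refine (continuousWithinAt_primitive (measure_singleton x) hint).mono_of_mem_nhdsWithin ?_
  rw [← Ici_inter_Iic]
  exact inter_mem_nhdsWithin _ (Iic_mem_nhds (by linarith))

theorem abs_integral_sub_integral_le_mul_abs_sq_sub_sq {f : ℝ → ℝ} {z M y w : ℝ}
    (hz : 0 ≤ z) (hf : ContinuousOn f (Ici z)) (hbd : ∀ t, z ≤ t → |f t| ≤ 2 * M * t)
    (hy : z ≤ y) (hw : z ≤ w) :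
    |(∫ t in z..y, f t) - ∫ t in z..w, f t| ≤ M * |y ^ 2 - w ^ 2| := by
  wlog hwy : w ≤ y generalizing y w
  · rw [abs_sub_comm, abs_sub_comm (y ^ 2)]
    exact this hw hy (le_of_not_ge hwy)
  have hint : ∀ x, z ≤ x → IntervalIntegrable f volume z x := fun x hx =>
    (hf.mono Icc_subset_Ici_self).intervalIntegrable_of_Icc hx
  rw [integral_interval_sub_left (hint y hy) (hint w hw),
    abs_of_nonneg (sub_nonneg.2 (pow_le_pow_left₀ (by linarith) hwy 2))]
  calc ‖∫ t in w..y, f t‖ ≤ ∫ t in w..y, 2 * M * t :=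
        norm_integral_le_of_norm_le hwy
          (ae_of_all _ fun t ht => hbd t (hw.trans ht.1.le))
          ((by fun_prop : Continuous fun t : ℝ => 2 * M * t).intervalIntegrable w y)
    _ = M * (y ^ 2 - w ^ 2) := by
        rw [intervalIntegral.integral_const_mul, integral_id]; ring

theorem abs_two_mul_div_le {z abar bbar t α β : ℝ} (hz : 0 < z) (hzt : z ≤ t) (habar : 0 < abar)
    (hbbar : 0 ≤ bbar) (hα : abar⁻¹ ≤ α) (hβ : |β| ≤ bbar * (1 + |t|)) :
    |2 * β / α| ≤ 2 * (abar * bbar * (1 + z⁻¹)) * t := by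
  have hα0 : 0 < α := (inv_pos.2 habar).trans_le hα
  have ht : 0 < t := hz.trans_le hzt
  rw [abs_of_pos ht] at hβ
  have hαinv : α⁻¹ ≤ abar := inv_le_of_inv_le₀ habar hα
  have hlin : 1 + t ≤ (1 + z⁻¹) * t := by
    have : 1 ≤ z⁻¹ * t := by rw [inv_mul_eq_div, one_le_div hz]; exact hzt
    linarith
  calc |2 * β / α| = 2 * |β| * α⁻¹ := by
        rw [abs_div, abs_mul, abs_two, abs_of_pos hα0, div_eq_mul_inv]
    _ ≤ 2 * (bbar * (1 + t)) * abar := by gcongr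
    _ = 2 * (abar * bbar) * (1 + t) := by ring
    _ ≤ 2 * (abar * bbar) * ((1 + z⁻¹) * t) := by gcongr
    _ = 2 * (abar * bbar * (1 + z⁻¹)) * t := by ring

theorem mul_le_integral_of_le_on_Icc {g : ℝ → ℝ} {z s y m : ℝ} (hzs : z ≤ s) (hsy : s ≤ y)
    (hg : IntervalIntegrable g volume z y) (hg0 : ∀ w ∈ Icc z y, 0 ≤ g w)
    (hgm : ∀ w ∈ Icc s y, m ≤ g w) :
    (y - s) * m ≤ ∫ w in z..y, g w := by
  have hs : s ∈ uIcc z y := by rw [uIcc_of_le (hzs.trans hsy)]; exact ⟨hzs, hsy⟩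
  calc (y - s) * m = ∫ _ in s..y, m := by rw [intervalIntegral.integral_const, smul_eq_mul]
    _ ≤ ∫ w in s..y, g w :=
        integral_mono_on hsy intervalIntegrable_const (hg.mono_set (uIcc_subset_uIcc_right hs)) hgm
    _ ≤ ∫ w in z..y, g w :=
        integral_mono_interval hzs hsy le_rfl ((ae_restrict_iff' measurableSet_Ioc).2
          (ae_of_all _ fun w hw => hg0 w (Ioc_subset_Icc_self hw))) hg

theorem tendsto_integral_atTop_of_div_le {F : ℝ → ℝ} {z y₀ c : ℝ} (hzy₀ : z ≤ y₀) (hy₀ : 0 < y₀)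
    (hc : 0 < c) (hF : ContinuousOn F (Ici z)) (hF0 : ∀ y, z ≤ y → 0 ≤ F y)
    (hFc : ∀ y, y₀ ≤ y → c / y ≤ F y) :
    Tendsto (fun x => ∫ y in z..x, F y) atTop atTop := by
  have hint : ∀ p q, z ≤ p → p ≤ q → IntervalIntegrable F volume p q := fun p q hp hpq =>
    (hF.mono fun t ht => hp.trans ht.1).intervalIntegrable_of_Icc hpq
  have hlog : ∀ x, y₀ ≤ x → c * Real.log (x / y₀) ≤ ∫ y in z..x, F y := by
    intro x hx
    have h0 : (0 : ℝ) ∉ uIcc y₀ x := by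
      rw [uIcc_of_le hx]; exact fun h => (hy₀.trans_le h.1).ne rfl
    calc c * Real.log (x / y₀) = ∫ y in y₀..x, c / y := by
          simp_rw [div_eq_mul_inv c, intervalIntegral.integral_const_mul, integral_inv h0]
      _ ≤ ∫ y in y₀..x, F y :=
          integral_mono_on hx
            ((continuousOn_const.div continuousOn_id fun t ht => (hy₀.trans_le
              (by rw [uIcc_of_le hx] at ht; exact ht.1)).ne').intervalIntegrable)
            (hint y₀ x hzy₀ hx) fun t ht => hFc t ht.1
      _ ≤ ∫ y in z..x, F y :=
          integral_mono_interval hzy₀ hx le_rfl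
            ((ae_restrict_iff' measurableSet_Ioc).2 (ae_of_all _ fun y hy => hF0 y hy.1.le))
            (hint z x le_rfl (hzy₀.trans hx))
  refine tendsto_atTop_mono' atTop (eventually_atTop.2 ⟨y₀, hlog⟩) ?_
  exact (Real.tendsto_log_atTop.comp (tendsto_id.atTop_div_const hy₀)).const_mul_atTop hc

theorem tendsto_exit_integral_atTop {z M abar : ℝ} {a Λ : ℝ → ℝ} (hM : 0 ≤ M)
    (hacont : ContinuousOn a (Ici z)) (ha : ∀ w, z ≤ w → 0 < a w ∧ a w ≤ abar)
    (hΛcont : ContinuousOn Λ (Ici z))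
    (hΛ : ∀ y w, z ≤ y → z ≤ w → |Λ y - Λ w| ≤ M * |y ^ 2 - w ^ 2|) :
    Tendsto (fun x => ∫ y in z..x, ∫ w in z..y, Real.exp (Λ w - Λ y) / a w) atTop atTop := by
  have habar : 0 < abar := (ha z le_rfl).1.trans_le (ha z le_rfl).2
  have hexpΛ : ContinuousOn (fun w => Real.exp (Λ w)) (Ici z) :=
    Real.continuous_exp.comp_continuousOn hΛcont
  have hinner : ∀ y, (∫ w in z..y, Real.exp (Λ w - Λ y) / a w)
      = (∫ w in z..y, Real.exp (Λ w) / a w) / Real.exp (Λ y) := by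
    intro y
    simp only [Real.exp_sub, div_right_comm _ (Real.exp (Λ y)), intervalIntegral.integral_div]
  refine tendsto_integral_atTop_of_div_le (y₀ := max (z + 1) 1)
    (c := Real.exp (-(2 * M)) / abar) (by linarith [le_max_left (z + 1) 1]) (by positivity)
    (by positivity) ?_ ?_ ?_
  · simp only [hinner]
    exact (hexpΛ.div hacont fun w hw => (ha w hw).1.ne').continuousOn_primitive_Ici.div hexpΛ
      fun _ _ => (Real.exp_pos _).ne'
  · exact fun y hy => integral_nonneg hy fun w hw =>
      div_nonneg (Real.exp_pos _).le (ha w hw.1).1.le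
  intro y hy
  have hy1 : 1 ≤ y := (le_max_right _ _).trans hy
  have hzy : z + 1 ≤ y := (le_max_left _ _).trans hy
  have hy0 : 0 < y := one_pos.trans_le hy1
  have hyinv : 0 < y⁻¹ ∧ y⁻¹ ≤ 1 := ⟨inv_pos.2 hy0, inv_le_one_of_one_le₀ hy1⟩
  have hwindow : ∀ w ∈ Icc (y - y⁻¹) y,
      Real.exp (-(2 * M)) / abar ≤ Real.exp (Λ w - Λ y) / a w := by
    rintro w ⟨hlo, hhi⟩
    have hzw : z ≤ w := by linarith
    have hsq : y ^ 2 - w ^ 2 ≤ 2 := by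
      have : y * y⁻¹ = 1 := mul_inv_cancel₀ hy0.ne'
      nlinarith
    have hΛyw : Λ y - Λ w ≤ M * (y ^ 2 - w ^ 2) := by
      have := hΛ y w (by linarith) hzw
      rw [abs_of_nonneg (sub_nonneg.2 (pow_le_pow_left₀ (by linarith) hhi 2))] at this
      exact (le_abs_self _).trans this
    exact div_le_div₀ (Real.exp_pos _).le
      (Real.exp_le_exp.2 (by nlinarith)) (ha w hzw).1 (ha w hzw).2
  calc Real.exp (-(2 * M)) / abar / y = (y - (y - y⁻¹)) * (Real.exp (-(2 * M)) / abar) := by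
        ring
    _ ≤ _ := mul_le_integral_of_le_on_Icc (by linarith) (by linarith)
        (ContinuousOn.intervalIntegrable_of_Icc (by linarith)
          (((Real.continuous_exp.comp_continuousOn (hΛcont.sub continuousOn_const)).div hacont
            fun w hw => (ha w hw).1.ne').mono Icc_subset_Ici_self))
        (fun w hw => div_nonneg (Real.exp_pos _).le (ha w hw.1).1.le) hwindow

theorem stmt15 (z : ℝ) (hz : 0 < z) (a b : ℝ → ℝ)
    (hacont : ContinuousOn a (Ici z)) (hbcont : ContinuousOn b (Ici z))
    (abar bbar : ℝ) (habar : 0 < abar) (hbbar : 0 < bbar)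
    (ha : ∀ x : ℝ, z ≤ x → abar⁻¹ ≤ a x ∧ a x ≤ abar)
    (hb : ∀ x : ℝ, z ≤ x → |b x| ≤ bbar * (1 + |x|))
    (Λ u : ℝ → ℝ)
    (hΛ : ∀ x : ℝ, Λ x = ∫ y in z..x, 2 * b y / a y)
    (hu : ∀ x : ℝ, u x = 2 * ∫ y in z..x, ∫ w in z..y, Real.exp (Λ w - Λ y) / a w) :
    (∃ M > (0 : ℝ), ∀ y w : ℝ, z ≤ y → z ≤ w → |Λ y - Λ w| ≤ M * |y ^ 2 - w ^ 2|) ∧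
      Tendsto u atTop atTop := by
  have ha0 : ∀ x, z ≤ x → 0 < a x := fun x hx => (inv_pos.2 habar).trans_le (ha x hx).1
  have hdrift : ContinuousOn (fun y => 2 * b y / a y) (Ici z) :=
    (continuousOn_const.mul hbcont).div hacont fun x hx => (ha0 x hx).ne'
  have hM : 0 < abar * bbar * (1 + z⁻¹) := by positivity
  have hquad : ∀ y w, z ≤ y → z ≤ w →
      |Λ y - Λ w| ≤ abar * bbar * (1 + z⁻¹) * |y ^ 2 - w ^ 2| := by
    intro y w hy hw
    rw [hΛ, hΛ]
    exact abs_integral_sub_integral_le_mul_abs_sq_sub_sq hz.le hdrift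
      (fun t ht => abs_two_mul_div_le hz ht habar hbbar.le (ha t ht).1 (hb t ht)) hy hw
  have hΛcont : ContinuousOn Λ (Ici z) := by
    rw [show Λ = _ from funext hΛ]
    exact hdrift.continuousOn_primitive_Ici
  refine ⟨⟨_, hM, hquad⟩, ?_⟩
  rw [show u = _ from funext hu]
  exact (tendsto_exit_integral_atTop hM.le hacont (fun w hw => ⟨ha0 w hw, (ha w hw).2⟩)
    hΛcont hquad).const_mul_atTop two_pos
end
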